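/- Every M-convex set (the set of integer points of an integral base polyhedron) has a dec-min element, i.e., an element x with x ≤_dec y for all y in the set. -/

import Mathlib

open Finset

/-- Descending rearrangement of a tuple. -/
noncomputable def sortDesc {n : ℕ} {α : Type*} [LinearOrder α] (x : Fin n → α) : Fin n → α :=
  x ∘ (Tuple.sort (fun i => OrderDual.toDual (x i)))

/-- `x <_dec y` : strict lexicographic comparison of descending rearrangements. -/
noncomputable def decLT {n : ℕ} {α : Type*} [LinearOrder α] (x y : Fin n → α) : Prop :=
  ∃ i : Fin n, (∀ j : Fin n, j < i → sortDesc x j = sortDesc y j) ∧ sortDesc x i < sortDesc y i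

/-- `x ≤_dec y` : lexicographic comparison of descending rearrangements. -/
noncomputable def decLE {n : ℕ} {α : Type*} [LinearOrder α] (x y : Fin n → α) : Prop :=
  sortDesc x = sortDesc y ∨ decLT x y

/-- `x` is a decreasingly minimal (dec-min) element of `S`. -/
noncomputable def DecMin {n : ℕ} (S : Set (Fin n → ℤ)) (x : Fin n → ℤ) : Prop :=
  x ∈ S ∧ ∀ y ∈ S, decLE x y

/-- Embedding of integer vectors into real vectors. -/
def castVec {n : ℕ} (z : Fin n → ℤ) : Fin n → ℝ := fun i => (z i : ℝ)

/-- `S ⊆ ℤⁿ` is an integrally convex set: every point of `conv S` lies in the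
convex hull of the points of `S` in its integral neighborhood. -/
def IntConvexSet {n : ℕ} (S : Set (Fin n → ℤ)) : Prop :=
  S.Nonempty ∧ ∀ x : Fin n → ℝ,
    x ∈ convexHull ℝ (castVec '' S) →
    x ∈ convexHull ℝ (castVec '' {z ∈ S | ∀ i, |x i - (z i : ℝ)| < 1})

/-- M-convex set: nonempty subset of ℤⁿ satisfying the exchange axiom. -/
def MConvexSet {n : ℕ} (S : Set (Fin n → ℤ)) : Prop :=
  S.Nonempty ∧ ∀ x ∈ S, ∀ y ∈ S, ∀ i : Fin n, y i < x i →
    ∃ j : Fin n, x j < y j ∧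
      (x - Pi.single i 1 + Pi.single j 1) ∈ S ∧
      (y + Pi.single i 1 - Pi.single j 1) ∈ S

/-!
An exchange step `x ↦ x - e_i + e_j` keeps the component sum and moves `x` closer to `y` in ℓ¹,
so all elements of an M-convex set have the same sum `s`. Fix an element `x₀` and a bound
`M ≥ max x₀`. Vectors with sum `s` and all entries `≤ M` form a finite set, so among the elements
of `S` bounded by `M` one has a lexicographically least descending rearrangement. It is dec-min:
any element of `S` not bounded by `M` has an entry `> M`, hence a larger maximum.
-/

lemma sum_natAbs_sub_exchange_lt {ι : Type*} [Fintype ι] [DecidableEq ι] {x y : ι → ℤ}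
    {i j : ι} (hi : y i < x i) (hj : x j < y j) :
    ∑ k, ((x - Pi.single i 1 + Pi.single j 1 : ι → ℤ) k - y k).natAbs <
      ∑ k, (x k - y k).natAbs := by
  have hij : i ≠ j := by rintro rfl; omega
  apply Finset.sum_lt_sum
  · intro k _
    simp only [Pi.add_apply, Pi.sub_apply, Pi.single_apply]
    split_ifs <;> subst_vars <;> omega
  · refine ⟨i, Finset.mem_univ i, ?_⟩
    simp only [Pi.add_apply, Pi.sub_apply, Pi.single_eq_same, Pi.single_eq_of_ne hij]
    omega

namespace MConvexSet

variable {n : ℕ} {S : Set (Fin n → ℤ)}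

lemma sum_le (hS : MConvexSet S) {x y : Fin n → ℤ} (hx : x ∈ S) (hy : y ∈ S) :
    ∑ i, x i ≤ ∑ i, y i := by
  induction hd : ∑ k, (x k - y k).natAbs using Nat.strong_induction_on generalizing x with
  | _ d ih =>
    by_contra! hlt
    obtain ⟨i, -, hi⟩ := Finset.exists_lt_of_sum_lt hlt
    obtain ⟨j, hj, hx', -⟩ := hS.2 x hx y hy i hi
    have hsum' : ∑ k, (x - Pi.single i 1 + Pi.single j 1 : Fin n → ℤ) k = ∑ k, x k := by
      simp [Finset.sum_add_distrib, Finset.sum_sub_distrib]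
    have hx'_le := ih _ (hd ▸ sum_natAbs_sub_exchange_lt hi hj) hx' rfl
    omega

lemma sum_eq (hS : MConvexSet S) {x y : Fin n → ℤ} (hx : x ∈ S) (hy : y ∈ S) :
    ∑ i, x i = ∑ i, y i :=
  (hS.sum_le hx hy).antisymm (hS.sum_le hy hx)

end MConvexSet

section DecOrder

variable {n : ℕ} {α : Type*} [LinearOrder α]

lemma sortDesc_antitone (x : Fin n → α) : Antitone (sortDesc x) :=
  fun _ _ hab => Tuple.monotone_sort (fun i => OrderDual.toDual (x i)) hab

lemma le_sortDesc_zero (x : Fin n → α) (i : Fin n) : x i ≤ sortDesc x ⟨0, i.pos⟩ := by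
  have hx : x i = sortDesc x ((Tuple.sort fun k => OrderDual.toDual (x k)).symm i) := by
    simp [sortDesc]
  exact hx ▸ sortDesc_antitone x (Fin.mk_le_of_le_val (Nat.zero_le _))

lemma decLT_of_forall_lt {x y : Fin n → α} {k : Fin n} (h : ∀ i, x i < y k) : decLT x y := by
  refine ⟨⟨0, k.pos⟩, fun j hj => absurd hj (Nat.not_lt_zero j), ?_⟩
  calc sortDesc x ⟨0, k.pos⟩ < y k := h _
    _ ≤ sortDesc y ⟨0, k.pos⟩ := le_sortDesc_zero y k

lemma decLE_of_toLex_le {x y : Fin n → α} (h : toLex (sortDesc x) ≤ toLex (sortDesc y)) :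
    decLE x y := by
  rcases h.eq_or_lt with heq | hlt
  · exact Or.inl (toLex.injective heq)
  · obtain ⟨i, hlt_before, hlt_at⟩ := hlt
    exact Or.inr ⟨i, hlt_before, hlt_at⟩

end DecOrder

lemma finite_setOf_sum_eq_of_le {ι : Type*} [Fintype ι] (s M : ℤ) :
    {x : ι → ℤ | ∑ i, x i = s ∧ ∀ i, x i ≤ M}.Finite := by
  refine (Set.Finite.pi fun _ => Set.finite_Icc (s + M - Fintype.card ι * M) M).subset ?_
  rintro x ⟨hsum, hle⟩ i -
  refine ⟨?_, hle i⟩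
  have hgap : M - x i ≤ ∑ j, (M - x j) :=
    Finset.single_le_sum (f := fun j => M - x j) (fun j _ => sub_nonneg.2 (hle j))
      (Finset.mem_univ i)
  simp only [Finset.sum_sub_distrib, Finset.sum_const, Finset.card_univ, nsmul_eq_mul,
    hsum] at hgap
  linarith

theorem exists_decMin_of_sum_eq {n : ℕ} {S : Set (Fin n → ℤ)} (hne : S.Nonempty) {s : ℤ}
    (hsum : ∀ x ∈ S, ∑ i, x i = s) : ∃ x, DecMin S x := by
  obtain ⟨x₀, hx₀⟩ := hne
  obtain ⟨M, hM⟩ := (Set.finite_range x₀).bddAbove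
  set C := {x ∈ S | ∀ i, x i ≤ M}
  have hC : C.Finite := (finite_setOf_sum_eq_of_le s M).subset fun x hx => ⟨hsum x hx.1, hx.2⟩
  obtain ⟨a, ⟨haS, haM⟩, ha⟩ := Set.exists_min_image C (fun x => toLex (sortDesc x)) hC
    ⟨x₀, hx₀, fun i => hM ⟨i, rfl⟩⟩
  refine ⟨a, haS, fun y hy => ?_⟩
  by_cases hyM : ∀ i, y i ≤ M
  · exact decLE_of_toLex_le (ha y ⟨hy, hyM⟩)
  · obtain ⟨k, hk⟩ := not_forall.1 hyM
    exact Or.inr (decLT_of_forall_lt fun i => (haM i).trans_lt (not_le.1 hk))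

theorem mconvex_has_decmin (n : ℕ) (S : Set (Fin n → ℤ)) (hS : MConvexSet S) :
    ∃ x, DecMin S x := by
  obtain ⟨x₀, hx₀⟩ := hS.1
  exact exists_decMin_of_sum_eq ⟨x₀, hx₀⟩ fun x hx => hS.sum_eq hx hx₀
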